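/- If H is a graph with o(H) = 𝒟, then γ_MB(K₂⊙H) = 1 + γ_MB(H). -/

import Mathlib

/-!
Formalization of the Maker-Breaker domination game (MBD game).

In the MBD game on a graph `G`, Dominator and Staller alternately select
previously unplayed vertices.  Dominator wins when the set of vertices he has
selected is a dominating set of `G`; Staller wins when she has selected a
vertex of every dominating set of `G`, which happens exactly when the closed
neighbourhood of some vertex is entirely contained in her set of selected
vertices.
-/

/-- `D` is a dominating set of `G` (as a finset of vertices). -/
def IsDomSet {V : Type*} (G : SimpleGraph V) (D : Finset V) : Prop :=
  ∀ v, v ∈ D ∨ ∃ u ∈ D, G.Adj u v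

/-- Staller (whose selected vertices form `S`) has won: she owns the whole
closed neighbourhood of some vertex, hence a vertex of every dominating set. -/
def StallerWon {V : Type*} (G : SimpleGraph V) (S : Finset V) : Prop :=
  ∃ v, v ∈ S ∧ ∀ u, G.Adj v u → u ∈ S

section Game

variable {V : Type*} [DecidableEq V]

mutual
  /-- Position with Dominator's vertices `D`, Staller's vertices `S` and
  Dominator to move: Dominator can guarantee to complete a dominating set
  using at most `k` further moves of his own. -/
  inductive DomWinD (G : SimpleGraph V) : Finset V → Finset V → ℕ → Prop where
    | done (D S : Finset V) (k : ℕ) : IsDomSet G D → DomWinD G D S k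
    | step (D S : Finset V) (k : ℕ) (v : V) : v ∉ D → v ∉ S →
        DomWinS G (insert v D) S k → DomWinD G D S (k + 1)

  /-- Position with Dominator's vertices `D`, Staller's vertices `S` and
  Staller to move: Dominator can guarantee to complete a dominating set
  using at most `k` further moves of his own. -/
  inductive DomWinS (G : SimpleGraph V) : Finset V → Finset V → ℕ → Prop where
    | done (D S : Finset V) (k : ℕ) : IsDomSet G D → DomWinS G D S k
    | step (D S : Finset V) (k : ℕ) : (∃ w, w ∉ D ∧ w ∉ S) →
        (∀ w, w ∉ D → w ∉ S → DomWinD G D (insert w S) k) → DomWinS G D S k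
end

mutual
  /-- Position with Dominator's vertices `D`, Staller's vertices `S` and
  Staller to move: Staller can guarantee to claim a whole closed neighbourhood
  using at most `k` further moves of her own. -/
  inductive StalWinS (G : SimpleGraph V) : Finset V → Finset V → ℕ → Prop where
    | done (D S : Finset V) (k : ℕ) : StallerWon G S → StalWinS G D S k
    | step (D S : Finset V) (k : ℕ) (w : V) : w ∉ D → w ∉ S →
        StalWinD G D (insert w S) k → StalWinS G D S (k + 1)

  /-- Position with Dominator's vertices `D`, Staller's vertices `S` and
  Dominator to move: Staller can guarantee to claim a whole closed
  neighbourhood using at most `k` further moves of her own. -/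
  inductive StalWinD (G : SimpleGraph V) : Finset V → Finset V → ℕ → Prop where
    | done (D S : Finset V) (k : ℕ) : StallerWon G S → StalWinD G D S k
    | step (D S : Finset V) (k : ℕ) : (∃ v, v ∉ D ∧ v ∉ S) →
        (∀ v, v ∉ D → v ∉ S → StalWinS G (insert v D) S k) → StalWinD G D S k
end

/-- `γ_MB(G)`: minimum number of Dominator's moves with which he can guarantee
to win the D-game (Dominator moves first); `⊤` if he cannot win it. -/
noncomputable def gammaMB (G : SimpleGraph V) : ℕ∞ :=
  sInf {k : ℕ∞ | ∃ n : ℕ, k = n ∧ DomWinD G ∅ ∅ n}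

/-- `γ_MB'(G)`: minimum number of Dominator's moves with which he can guarantee
to win the S-game (Staller moves first); `⊤` if he cannot win it. -/
noncomputable def gammaMB' (G : SimpleGraph V) : ℕ∞ :=
  sInf {k : ℕ∞ | ∃ n : ℕ, k = n ∧ DomWinS G ∅ ∅ n}

/-- `γ_SMB(G)`: minimum number of Staller's moves with which she can guarantee
to win the D-game (Dominator moves first); `⊤` if she cannot win it. -/
noncomputable def gammaSMB (G : SimpleGraph V) : ℕ∞ :=
  sInf {k : ℕ∞ | ∃ n : ℕ, k = n ∧ StalWinD G ∅ ∅ n}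

/-- `γ_SMB'(G)`: minimum number of Staller's moves with which she can guarantee
to win the S-game (Staller moves first); `⊤` if she cannot win it. -/
noncomputable def gammaSMB' (G : SimpleGraph V) : ℕ∞ :=
  sInf {k : ℕ∞ | ∃ n : ℕ, k = n ∧ StalWinS G ∅ ∅ n}

/-- Outcome `𝒟`: Dominator has a winning strategy no matter who starts. -/
def OutcomeD (G : SimpleGraph V) : Prop :=
  (∃ n, DomWinD G ∅ ∅ n) ∧ (∃ n, DomWinS G ∅ ∅ n)

/-- Outcome `𝒮`: Staller has a winning strategy no matter who starts. -/
def OutcomeS (G : SimpleGraph V) : Prop :=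
  (∃ n, StalWinD G ∅ ∅ n) ∧ (∃ n, StalWinS G ∅ ∅ n)

/-- Outcome `𝒩`: the first player has a winning strategy. -/
def OutcomeN (G : SimpleGraph V) : Prop :=
  (∃ n, DomWinD G ∅ ∅ n) ∧ (∃ n, StalWinS G ∅ ∅ n)

end Game

/-- The corona product `G ⊙ H`: one copy of `G`, a copy of `H` for every
vertex of `G`, and the `i`-th vertex of `G` joined to every vertex of the
`i`-th copy of `H`. -/
def coronaProd {α β : Type*} (G : SimpleGraph α) (H : SimpleGraph β) :
    SimpleGraph (α ⊕ α × β) where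
  Adj x y :=
    match x, y with
    | Sum.inl a, Sum.inl a' => G.Adj a a'
    | Sum.inl a, Sum.inr p => a = p.1
    | Sum.inr p, Sum.inl a => a = p.1
    | Sum.inr p, Sum.inr q => p.1 = q.1 ∧ H.Adj p.2 q.2
  symm := by
    refine ⟨?_⟩
    rintro (a | p) (a' | q) h
    · exact G.adj_symm h
    · exact h
    · exact h
    · exact ⟨h.1.symm, H.adj_symm h.2⟩
  loopless := by
    refine ⟨?_⟩
    rintro (a | p) h
    · exact G.ne_of_adj h rfl
    · exact H.ne_of_adj h.2 rfl

/-- The domination number `γ(G)` of a finite graph. -/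
noncomputable def domNumber {V : Type*} [Fintype V] (G : SimpleGraph V) : ℕ :=
  sInf {n : ℕ | ∃ D : Finset V, D.card = n ∧ IsDomSet G D}

/-- `v` is a dominating vertex: it is adjacent to all other vertices. -/
def IsDomVertex {V : Type*} (G : SimpleGraph V) (v : V) : Prop :=
  ∀ u, u ≠ v → G.Adj v u

/-- `v` is an isolated vertex (degree `0`). -/
def IsIsolatedVertex {V : Type*} (G : SimpleGraph V) (v : V) : Prop :=
  ∀ u, ¬ G.Adj v u

/-- `v` is a leaf (degree `1`). -/
def IsLeaf {V : Type*} (G : SimpleGraph V) (v : V) : Prop :=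
  ∃! u, G.Adj v u

/-- `v` is a strong support vertex: adjacent to at least two leaves. -/
def IsStrongSupport {V : Type*} (G : SimpleGraph V) (v : V) : Prop :=
  ∃ u w, u ≠ w ∧ G.Adj v u ∧ G.Adj v w ∧ IsLeaf G u ∧ IsLeaf G w

/-!
Dominator's first move lies in the branch `{r} ∪ copy r` of one root `r`, and Staller answers
with the other root `a`. From then on the vertices of copy `a` can only be dominated from inside
copy `a`, where Staller can answer Dominator as in an `H`-game that Dominator starts; hence
Dominator needs at least `1 + γ_MB(H)` moves. Conversely, Dominator opens with a root, which
dominates everything except the other copy. If Staller does not take the other root, Dominator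
takes it and has won in two moves; otherwise he plays his `H`-strategy in the other copy, reading
each move of Staller outside that copy as an arbitrary move of hers inside it.
-/

section Game

variable {V : Type*} {G : SimpleGraph V}

theorem IsDomSet.not_stallerWon {D S : Finset V} (hD : IsDomSet G D) (hDS : Disjoint D S) :
    ¬ StallerWon G S := by
  rintro ⟨x, hxS, hx⟩
  rcases hD x with hxD | ⟨u, huD, hux⟩
  · exact Finset.disjoint_left.1 hDS hxD hxS
  · exact Finset.disjoint_left.1 hDS huD (hx u hux.symm)

theorem not_isDomSet_empty [Nonempty V] : ¬ IsDomSet G ∅ := fun h => by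
  obtain ⟨x⟩ := ‹Nonempty V›
  simpa using h x

variable [DecidableEq V]

theorem DomWinD.zero_iff {D S : Finset V} : DomWinD G D S 0 ↔ IsDomSet G D :=
  ⟨fun h => by cases h; assumption, .done _ _ _⟩

mutual

theorem DomWinD.mono {D S : Finset V} {k k' : ℕ} (h : DomWinD G D S k) (hk : k ≤ k') :
    DomWinD G D S k' :=
  match h with
  | .done _ _ _ hD => .done _ _ _ hD
  | .step _ _ k v hvD hvS h => by
    obtain ⟨j, rfl⟩ : ∃ j, k' = j + 1 := ⟨k' - 1, by omega⟩
    exact .step _ _ _ v hvD hvS (DomWinS.mono h (by omega))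

theorem DomWinS.mono {D S : Finset V} {k k' : ℕ} (h : DomWinS G D S k) (hk : k ≤ k') :
    DomWinS G D S k' :=
  match h with
  | .done _ _ _ hD => .done _ _ _ hD
  | .step _ _ _ hfree h => .step _ _ _ hfree fun w hwD hwS => DomWinD.mono (h w hwD hwS) hk

end

mutual

theorem DomWinD.of_staller_subset {D S S₀ : Finset V} {k : ℕ} (h : DomWinD G D S k)
    (hS : S₀ ⊆ S) : DomWinD G D S₀ k :=
  match h with
  | .done _ _ _ hD => .done _ _ _ hD
  | .step _ _ _ v hvD hvS h =>
    .step _ _ _ v hvD (fun hv => hvS (hS hv)) (DomWinS.of_staller_subset h hS)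

theorem DomWinS.of_staller_subset {D S S₀ : Finset V} {k : ℕ} (h : DomWinS G D S k)
    (hS : S₀ ⊆ S) : DomWinS G D S₀ k :=
  match h with
  | .done _ _ _ hD => .done _ _ _ hD
  | .step _ _ _ ⟨w₀, hw₀D, hw₀S⟩ h => by
    refine .step _ _ _ ⟨w₀, hw₀D, fun hw => hw₀S (hS hw)⟩ fun w hwD hwS₀ => ?_
    by_cases hwS : w ∈ S
    · exact DomWinD.of_staller_subset (h w₀ hw₀D hw₀S)
        (Finset.insert_subset (Finset.mem_insert_of_mem hwS) (hS.trans (Finset.subset_insert _ _)))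
    · exact DomWinD.of_staller_subset (h w hwD hwS) (Finset.insert_subset_insert _ hS)

end

theorem DomWinS.domWinD_insert {D S : Finset V} {k : ℕ} {w : V} (h : DomWinS G D S k)
    (hwD : w ∉ D) (hwS : w ∉ S) : DomWinD G D (insert w S) k := by
  cases h with
  | done _ _ _ hD => exact .done _ _ _ hD
  | step _ _ _ _ h => exact h w hwD hwS

theorem DomWinS.domWinD {D S : Finset V} {k : ℕ} (h : DomWinS G D S k) : DomWinD G D S k := by
  cases h with
  | done _ _ _ hD => exact .done _ _ _ hD
  | step _ _ _ hfree h =>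
    obtain ⟨w₀, hw₀D, hw₀S⟩ := hfree
    exact (h w₀ hw₀D hw₀S).of_staller_subset (Finset.subset_insert _ _)

mutual

theorem DomWinD.not_stallerWon {D S : Finset V} {k : ℕ} (h : DomWinD G D S k)
    (hDS : Disjoint D S) : ¬ StallerWon G S :=
  match h with
  | .done _ _ _ hD => hD.not_stallerWon hDS
  | .step _ _ _ _ _ hvS h => DomWinS.not_stallerWon h (Finset.disjoint_insert_left.2 ⟨hvS, hDS⟩)

theorem DomWinS.not_stallerWon {D S : Finset V} {k : ℕ} (h : DomWinS G D S k)
    (hDS : Disjoint D S) : ¬ StallerWon G S :=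
  match h with
  | .done _ _ _ hD => hD.not_stallerWon hDS
  | .step _ _ _ ⟨w₀, hw₀D, hw₀S⟩ h => fun ⟨x, hxS, hx⟩ =>
    DomWinD.not_stallerWon (h w₀ hw₀D hw₀S) (Finset.disjoint_insert_right.2 ⟨hw₀D, hDS⟩)
      ⟨x, Finset.mem_insert_of_mem hxS, fun u hu => Finset.mem_insert_of_mem (hx u hu)⟩

end

theorem gammaMB_eq_one_add {W : Type*} [DecidableEq W] {G' : SimpleGraph W}
    (h₀ : ¬ DomWinD G ∅ ∅ 0) (hsucc : ∀ n, DomWinD G ∅ ∅ (n + 1) ↔ DomWinD G' ∅ ∅ n) :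
    gammaMB G = 1 + gammaMB G' := by
  rw [gammaMB, gammaMB, ENat.add_sInf, ← sInf_image]
  congr 1
  ext k
  simp only [Set.mem_image]
  constructor
  · rintro ⟨_ | n, rfl, hn⟩
    · exact absurd hn h₀
    · exact ⟨n, ⟨n, rfl, (hsucc n).1 hn⟩, by push_cast; ring⟩
  · rintro ⟨_, ⟨n, rfl, hn⟩, rfl⟩
    exact ⟨n + 1, by push_cast; ring, (hsucc n).2 hn⟩

end Game

section Corona

variable {α β : Type*} {G : SimpleGraph α} {H : SimpleGraph β}

theorem IsDomSet.of_coronaProd {Dg : Finset (α ⊕ α × β)} {Dh : Finset β} {a : α}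
    (hDg : IsDomSet (coronaProd G H) Dg) (haD : Sum.inl a ∉ Dg)
    (hD : ∀ b, Sum.inr (a, b) ∈ Dg → b ∈ Dh) : IsDomSet H Dh := by
  intro b
  rcases hDg (Sum.inr (a, b)) with hb | ⟨_ | ⟨c, u⟩, hu, hub⟩
  · exact Or.inl (hD b hb)
  · obtain rfl : _ = a := hub
    exact absurd hu haD
  · obtain ⟨rfl, hub⟩ : c = a ∧ H.Adj u b := hub
    exact Or.inr ⟨u, hD u hu, hub⟩

theorem IsDomSet.coronaProd {Dg : Finset (α ⊕ α × β)} {Dh : Finset β} {c : α}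
    (hDh : IsDomSet H Dh) (hD : ∀ b ∈ Dh, Sum.inr (c, b) ∈ Dg)
    (hout : ∀ x, (∀ b, x ≠ Sum.inr (c, b)) → x ∈ Dg ∨ ∃ u ∈ Dg, (coronaProd G H).Adj u x) :
    IsDomSet (coronaProd G H) Dg := by
  intro x
  by_cases hx : ∀ b, x ≠ Sum.inr (c, b)
  · exact hout x hx
  obtain ⟨b, rfl⟩ := not_forall_not.1 hx
  rcases hDh b with hb | ⟨u, hu, hub⟩
  · exact Or.inl (hD b hb)
  · exact Or.inr ⟨Sum.inr (c, u), hD u hu, rfl, hub⟩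

variable [DecidableEq α] [DecidableEq β]

mutual

theorem DomWinD.restrict_coronaProd {a : α} {Dg Sg : Finset (α ⊕ α × β)} {Dh Sh : Finset β}
    {k : ℕ} (h : DomWinD (coronaProd G H) Dg Sg k) (hDS : Disjoint Dg Sg)
    (haD : Sum.inl a ∉ Dg) (haS : Sum.inl a ∈ Sg) (hD : ∀ b, Sum.inr (a, b) ∈ Dg ↔ b ∈ Dh)
    (hS : ∀ b, Sum.inr (a, b) ∈ Sg ↔ b ∈ Sh) : DomWinD H Dh Sh k :=
  match h with
  | .done _ _ _ hDg => .done _ _ _ (hDg.of_coronaProd haD fun b => (hD b).1)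
  | .step _ _ k v hvD hvS h => by
    have hDS' : Disjoint (insert v Dg) Sg := Finset.disjoint_insert_left.2 ⟨hvS, hDS⟩
    have haD' : Sum.inl a ∉ insert v Dg := by
      rw [Finset.mem_insert, not_or]
      exact ⟨fun hav => hvS (hav ▸ haS), haD⟩
    by_cases hv : ∃ b, v = Sum.inr (a, b)
    · obtain ⟨b, hvb⟩ := hv
      refine .step _ _ _ b (fun hb => hvD (hvb ▸ (hD b).2 hb))
        (fun hb => hvS (hvb ▸ (hS b).2 hb)) ?_
      have hD' : ∀ b', Sum.inr (a, b') ∈ insert v Dg ↔ b' ∈ insert b Dh := fun b' => by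
        simp [hvb, hD]
      exact DomWinS.restrict_coronaProd h hDS' haD' haS hD' hS
    · -- a move outside copy `a` is wasted for the game on `H`
      have hD' : ∀ b, Sum.inr (a, b) ∈ insert v Dg ↔ b ∈ Dh := fun b => by
        rw [Finset.mem_insert, hD b, or_iff_right fun hb => hv ⟨b, hb.symm⟩]
      exact (DomWinS.restrict_coronaProd h hDS' haD' haS hD' hS).domWinD.mono k.le_succ

theorem DomWinS.restrict_coronaProd {a : α} {Dg Sg : Finset (α ⊕ α × β)} {Dh Sh : Finset β}
    {k : ℕ} (h : DomWinS (coronaProd G H) Dg Sg k) (hDS : Disjoint Dg Sg)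
    (haD : Sum.inl a ∉ Dg) (haS : Sum.inl a ∈ Sg) (hD : ∀ b, Sum.inr (a, b) ∈ Dg ↔ b ∈ Dh)
    (hS : ∀ b, Sum.inr (a, b) ∈ Sg ↔ b ∈ Sh) : DomWinS H Dh Sh k :=
  match h with
  | .done _ _ _ hDg => .done _ _ _ (hDg.of_coronaProd haD fun b => (hD b).1)
  | .step _ _ _ hfree h => by
    by_cases hfreeH : ∃ b, b ∉ Dh ∧ b ∉ Sh
    · refine .step _ _ _ hfreeH fun b hbD hbS => ?_
      have hbD' : Sum.inr (a, b) ∉ Dg := mt (hD b).1 hbD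
      exact DomWinD.restrict_coronaProd (h _ hbD' (mt (hS b).1 hbS))
        (Finset.disjoint_insert_right.2 ⟨hbD', hDS⟩) haD (Finset.mem_insert_of_mem haS) hD
        (fun b' => by simp [hS])
    by_cases hDh : IsDomSet H Dh
    · exact .done _ _ _ hDh
    -- copy `a` is full, so an undominated vertex of it has its closed neighbourhood in
    -- Staller's hands
    exfalso
    push Not at hfreeH
    obtain ⟨x, hxD, hx⟩ : ∃ x, x ∉ Dh ∧ ∀ u ∈ Dh, ¬ H.Adj u x := by
      simpa [IsDomSet] using hDh
    refine (DomWinS.step _ _ _ hfree h).not_stallerWon hDS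
      ⟨Sum.inr (a, x), (hS x).2 (hfreeH x hxD), ?_⟩
    rintro (c | ⟨c, y⟩) hxy
    · obtain rfl : c = a := hxy
      exact haS
    · obtain ⟨rfl, hxy⟩ : a = c ∧ H.Adj x y := hxy
      exact (hS y).2 (hfreeH y fun hy => hx y hy hxy.symm)

end

mutual

theorem DomWinD.lift_coronaProd {c : α} {Dg Sg : Finset (α ⊕ α × β)} {Dh Sh : Finset β}
    {k : ℕ} (h : DomWinD H Dh Sh k)
    (hout : ∀ x, (∀ b, x ≠ Sum.inr (c, b)) → x ∈ Dg ∨ ∃ u ∈ Dg, (coronaProd G H).Adj u x)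
    (hD : ∀ b, Sum.inr (c, b) ∈ Dg ↔ b ∈ Dh) (hS : ∀ b, Sum.inr (c, b) ∈ Sg → b ∈ Sh) :
    DomWinD (coronaProd G H) Dg Sg k :=
  match h with
  | .done _ _ _ hDh => .done _ _ _ (hDh.coronaProd (fun b => (hD b).2) hout)
  | .step _ _ _ v hvD hvS h => by
    refine .step _ _ _ (Sum.inr (c, v)) (mt (hD v).1 hvD) (mt (hS v) hvS) ?_
    have hout' : ∀ x, (∀ b, x ≠ Sum.inr (c, b)) →
        x ∈ insert (Sum.inr (c, v)) Dg ∨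
          ∃ u ∈ insert (Sum.inr (c, v)) Dg, (coronaProd G H).Adj u x :=
      fun x hx => (hout x hx).imp Finset.mem_insert_of_mem
        fun ⟨u, hu, hux⟩ => ⟨u, Finset.mem_insert_of_mem hu, hux⟩
    have hD' : ∀ b, Sum.inr (c, b) ∈ insert (Sum.inr (c, v)) Dg ↔ b ∈ insert v Dh := fun b => by
      simp [hD]
    exact DomWinS.lift_coronaProd h hout' hD' hS

theorem DomWinS.lift_coronaProd {c : α} {Dg Sg : Finset (α ⊕ α × β)} {Dh Sh : Finset β}
    {k : ℕ} (h : DomWinS H Dh Sh k)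
    (hout : ∀ x, (∀ b, x ≠ Sum.inr (c, b)) → x ∈ Dg ∨ ∃ u ∈ Dg, (coronaProd G H).Adj u x)
    (hD : ∀ b, Sum.inr (c, b) ∈ Dg ↔ b ∈ Dh) (hS : ∀ b, Sum.inr (c, b) ∈ Sg → b ∈ Sh) :
    DomWinS (coronaProd G H) Dg Sg k :=
  match h with
  | .done _ _ _ hDh => .done _ _ _ (hDh.coronaProd (fun b => (hD b).2) hout)
  | .step _ _ _ ⟨b₀, hb₀D, hb₀S⟩ h => by
    refine .step _ _ _ ⟨Sum.inr (c, b₀), mt (hD b₀).1 hb₀D, mt (hS b₀) hb₀S⟩ fun w hwD hwS => ?_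
    by_cases hw : ∃ b ∉ Sh, w = Sum.inr (c, b)
    · obtain ⟨b, hbS, hwb⟩ := hw
      have hS' : ∀ b', Sum.inr (c, b') ∈ insert w Sg → b' ∈ insert b Sh := fun b' => by
        simp only [Finset.mem_insert, hwb, Sum.inr.injEq, Prod.mk.injEq, true_and]
        exact Or.imp_right (hS b')
      exact DomWinD.lift_coronaProd (h b (mt (hD b).2 (hwb ▸ hwD)) hbS) hout hD hS'
    -- Staller's move is outside copy `c` or repeats one of her `H`-moves: pretend she played `b₀`
    push Not at hw
    have hS' : ∀ b', Sum.inr (c, b') ∈ insert w Sg → b' ∈ insert b₀ Sh := fun b' hb' => by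
      rcases Finset.mem_insert.1 hb' with hwb' | hb'
      · exact Finset.mem_insert_of_mem (not_not.1 fun hb'S => hw b' hb'S hwb'.symm)
      · exact Finset.mem_insert_of_mem (hS b' hb')
    exact DomWinD.lift_coronaProd (h b₀ hb₀D hb₀S) hout hD hS'

end

theorem DomWinD.of_coronaProd_succ [Nontrivial α] {m : ℕ}
    (h : DomWinD (coronaProd G H) ∅ ∅ (m + 1)) : DomWinD H ∅ ∅ m := by
  cases h with
  | done _ _ _ hDg => exact absurd hDg not_isDomSet_empty
  | step _ _ _ v _ _ h =>
    -- Staller takes a root whose branch `{a} ∪ copy a` avoids Dominator's first vertex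
    obtain ⟨a, ha⟩ := exists_ne (Sum.elim id Prod.fst v)
    have hv : ∀ x, Sum.elim id Prod.fst x = a → x ≠ v := by
      rintro x rfl rfl
      exact ha rfl
    have haD : Sum.inl a ∉ (insert v ∅ : Finset (α ⊕ α × β)) := by simpa using hv (.inl a) rfl
    refine (h.domWinD_insert haD (Finset.notMem_empty _)).restrict_coronaProd ?_ haD
      (Finset.mem_insert_self _ _) (fun b => ?_) (fun b => by simp)
    · simpa using (hv (.inl a) rfl).symm
    · simpa using hv (.inr (a, b)) rfl

theorem DomWinD.coronaProd_top_fin_two_succ {n : ℕ} (h : DomWinD H ∅ ∅ n) :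
    DomWinD (coronaProd (⊤ : SimpleGraph (Fin 2)) H) ∅ ∅ (n + 1) := by
  have hout : ∀ x, (∀ b, x ≠ Sum.inr (1, b)) → x ∈ (insert (Sum.inl 0) ∅ : Finset _) ∨
        ∃ u ∈ (insert (Sum.inl 0) ∅ : Finset _),
          (coronaProd (⊤ : SimpleGraph (Fin 2)) H).Adj u x := by
    rintro (r | ⟨r, b⟩) hx <;> fin_cases r
    · simp
    · exact Or.inr ⟨Sum.inl 0, by simp, (by decide : (0 : Fin 2) ≠ 1)⟩
    · exact Or.inr ⟨Sum.inl 0, by simp, rfl⟩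
    · exact absurd rfl (hx b)
  refine .step _ _ _ (Sum.inl 0) (Finset.notMem_empty _) (Finset.notMem_empty _) ?_
  cases n with
  | zero => exact .done _ _ _ ((DomWinD.zero_iff.1 h).coronaProd (by simp) hout)
  | succ n =>
    refine .step _ _ _ ⟨Sum.inl 1, by simp, by simp⟩ fun w _ _ => ?_
    by_cases hw : w = Sum.inl 1
    · subst hw
      exact h.lift_coronaProd hout (by simp) (by simp)
    · refine .step _ _ _ (Sum.inl 1) (by simp) (by simpa [eq_comm] using hw) (.done _ _ _ ?_)
      rintro (r | ⟨r, b⟩)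
      · fin_cases r <;> simp
      · exact Or.inr ⟨Sum.inl r, by fin_cases r <;> simp, rfl⟩

end Corona

/-- If `o(H) = 𝒟`, then `γ_MB(K₂ ⊙ H) = 1 + γ_MB(H)`. -/
theorem gammaMB_coronaProd_K2 {β : Type*} [Fintype β] [DecidableEq β]
    (H : SimpleGraph β) (hH : OutcomeD H) :
    gammaMB (coronaProd (⊤ : SimpleGraph (Fin 2)) H) = 1 + gammaMB H :=
  gammaMB_eq_one_add (fun h => not_isDomSet_empty (DomWinD.zero_iff.1 h))
    fun _ => ⟨DomWinD.of_coronaProd_succ, DomWinD.coronaProd_top_fin_two_succ⟩
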